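/- Lemma (same-check endpoints of short labeled links). Let d ≥ 3 and let s be a syndrome on the toric lattice T_d whose distinct unsatisfied checks are pairwise at distance at least 5 from each other. Let C be a configuration on a decoding tree T_{i,q} in which every labeled link has length at most 4. Then every proper labeled link of C has both of its vertex endpoints associated with the same check of T_d. -/

import Mathlib

namespace ToricMS

/-- Checks of the toric lattice: vertices of the `d × d` torus grid. -/
abbrev V (d : ℕ) : Type := ZMod d × ZMod d

/-- The toric lattice `T_d`: two checks are adjacent iff their difference is
`(±1, 0)` or `(0, ±1)` mod `d` (for `d ≥ 3` the inequality clause is automatic). -/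
def Toric (d : ℕ) : SimpleGraph (V d) where
  Adj v w := v ≠ w ∧
    (v - w = (1, 0) ∨ v - w = (-1, 0) ∨ v - w = (0, 1) ∨ v - w = (0, -1))
  symm := by
    refine ⟨?_⟩
    rintro v w ⟨hne, h⟩
    refine ⟨hne.symm, ?_⟩
    have hswap : w - v = -(v - w) := by ring
    rcases h with h | h | h | h <;> rw [hswap, h] <;> simp [Prod.ext_iff]
  loopless := ⟨fun v h => h.1 rfl⟩

/-- Weight of an error: the number of qubits (edges) in error. -/
noncomputable def wt {d : ℕ} (e : (Toric d).edgeSet → ZMod 2) : ℕ :=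
  Nat.card {q : (Toric d).edgeSet // e q = 1}

/-- Syndrome of an error: mod-2 sum of the error over the qubits incident to each check. -/
noncomputable def synd {d : ℕ} (e : (Toric d).edgeSet → ZMod 2) : V d → ZMod 2 :=
  fun c => (Nat.card {q : (Toric d).edgeSet // e q = 1 ∧ c ∈ (q : Sym2 (V d))} : ZMod 2)

/-- A degenerate error: some different error of no larger weight has the same syndrome. -/
def Degenerate {d : ℕ} (e : (Toric d).edgeSet → ZMod 2) : Prop :=
  ∃ e' : (Toric d).edgeSet → ZMod 2, e' ≠ e ∧ wt e' ≤ wt e ∧ synd e' = synd e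

/-- The fake syndrome `s^c` having `c` as its only unsatisfied check. -/
def fakeS (d : ℕ) (c : V d) : V d → ZMod 2 := fun c' => if c' = c then 1 else 0

/-- The error `ε⁴` consisting of 4 consecutive collinear (horizontal) qubits. -/
def eps4 (d : ℕ) : (Toric d).edgeSet → ZMod 2 := fun q =>
  if q.val = s((((0 : ZMod d), (0 : ZMod d)) : V d), ((1, 0) : V d))
      ∨ q.val = s((((1 : ZMod d), (0 : ZMod d)) : V d), ((2, 0) : V d))
      ∨ q.val = s((((2 : ZMod d), (0 : ZMod d)) : V d), ((3, 0) : V d))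
      ∨ q.val = s((((3 : ZMod d), (0 : ZMod d)) : V d), ((4, 0) : V d))
  then 1 else 0

/-- Walk without return (wwr) in `T_d`, as its list of visited checks. -/
def IsWWR (d : ℕ) (l : List (V d)) : Prop :=
  l.Chain' (Toric d).Adj ∧ ∀ j : ℕ, j + 2 < l.length → l[j]? ≠ l[j + 2]?

/-- A walk starting with the root edge `e_q = {a, b}` (either orientation allowed). -/
def StartsQ (d : ℕ) (a b : V d) (l : List (V d)) : Prop :=
  l.take 2 = [a, b] ∨ l.take 2 = [b, a]

/-- Vertices of the decoding tree `T_{i,q}` (`q` the edge `{a,b}`): wwrs of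
length `1, …, i` starting with `e_q`, encoded by their check lists. -/
def IsTreeVertex (d : ℕ) (a b : V d) (i : ℕ) (l : List (V d)) : Prop :=
  IsWWR d l ∧ StartsQ d a b l ∧ 2 ≤ l.length ∧ l.length ≤ i + 1

/-- Edges of the decoding tree `T_{i,q}`: wwrs of length `1, …, i+1` starting with
`e_q` (an edge is identified with the wwr ending with it), where the root edge is
canonically represented by `[a, b]`. -/
def IsTreeEdge (d : ℕ) (a b : V d) (i : ℕ) (l : List (V d)) : Prop :=
  IsWWR d l ∧ StartsQ d a b l ∧ 2 ≤ l.length ∧ l.length ≤ i + 2 ∧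
    (l.length = 2 → l = [a, b])

/-- Dangling edges: tree edges at maximal depth, with a single endpoint in the tree. -/
def IsDangling (d : ℕ) (a b : V d) (i : ℕ) (l : List (V d)) : Prop :=
  IsTreeEdge d a b i l ∧ l.length = i + 2

/-- The check of `T_d` associated with a tree vertex. -/
def vcheck {d : ℕ} (l : List (V d)) : V d := l.getLastD 0

/-- Incidence between a tree vertex and a tree edge. -/
def IncidentVE {d : ℕ} (lv le : List (V d)) : Prop :=
  lv = le ∨ lv = le.dropLast ∨ (le.length = 2 ∧ lv = le.reverse)

/-- A configuration on the decoding tree for syndrome `s`: an edge labelling such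
that around every tree vertex, the mod-2 sum of the labels of the incident edges
equals the syndrome value of the associated check. -/
def IsConfig (d : ℕ) (a b : V d) (i : ℕ) (s : V d → ZMod 2)
    (C : List (V d) → ZMod 2) : Prop :=
  ∀ lv, IsTreeVertex d a b i lv →
    (Nat.card {le : List (V d) //
        IsTreeEdge d a b i le ∧ IncidentVE lv le ∧ C le = 1} : ZMod 2) = s (vcheck lv)

/-- Weight of a configuration: its number of labeled tree edges. -/
noncomputable def cweight (d : ℕ) (a b : V d) (i : ℕ) (C : List (V d) → ZMod 2) : ℕ :=
  Nat.card {le : List (V d) // IsTreeEdge d a b i le ∧ C le = 1}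

/-- Minimal weight of a configuration whose root edge has label `r`. -/
noncomputable def minW (d : ℕ) (a b : V d) (i : ℕ) (s : V d → ZMod 2) (r : ZMod 2) : ℕ :=
  sInf {n : ℕ | ∃ C : List (V d) → ZMod 2,
    IsConfig d a b i s C ∧ C [a, b] = r ∧ cweight d a b i C = n}

/-- A posteriori value of the (oriented) qubit `(a,b)` at iteration `i` computed by
min-sum (Wiberg): minimal root-labeled weight minus minimal root-unlabeled weight. -/
noncomputable def APPo (d : ℕ) (s : V d → ZMod 2) (i : ℕ) (a b : V d) : ℤ :=
  (minW d a b i s 1 : ℤ) - (minW d a b i s 0 : ℤ)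

/-- A posteriori value of a qubit (an unordered edge) at iteration `i`. -/
noncomputable def APP (d : ℕ) (s : V d → ZMod 2) (i : ℕ) : Sym2 (V d) → ℤ :=
  Sym2.lift ⟨fun a b => min (APPo d s i a b) (APPo d s i b a), fun _ _ => min_comm _ _⟩

/-- The MS hard-decision estimate at iteration `i`. -/
noncomputable def hatE (d : ℕ) (s : V d → ZMod 2) (i : ℕ) : (Toric d).edgeSet → ZMod 2 :=
  fun q => if APP d s i q.val < 0 then 1 else 0

/-- `s` is decoded by MS in `k` iterations: the estimate satisfies the syndrome at
iteration `k` and not before. -/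
def DecodedIn (d : ℕ) (s : V d → ZMod 2) (k : ℕ) : Prop :=
  1 ≤ k ∧ synd (hatE d s k) = s ∧ ∀ j, 1 ≤ j → j < k → synd (hatE d s j) ≠ s

/-- The error `e` is correctly decoded by MS. -/
def CorrectlyDecoded {d : ℕ} (e : (Toric d).edgeSet → ZMod 2) : Prop :=
  ∃ k, DecodedIn d (synd e) k ∧ hatE d (synd e) k = e

/-- Length of the longest common prefix of two lists. -/
def cpl {d : ℕ} : List (V d) → List (V d) → ℕ
  | x :: xs, y :: ys => if x = y then cpl xs ys + 1 else 0
  | _, _ => 0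

/-- Distance (number of edges of the connecting path) between two tree vertices. -/
def treeDist {d : ℕ} (lu lv : List (V d)) : ℕ :=
  if lu.take 2 = lv.take 2 then lu.length + lv.length - 2 * cpl lu lv
  else lu.length + lv.length - 3

/-- Strip a dangling edge down to its unique endpoint vertex. -/
def stripD {d : ℕ} (i : ℕ) (l : List (V d)) : List (V d) :=
  if l.length = i + 2 then l.dropLast else l

/-- `le` is an edge on the (unique) tree path between tree vertices `lu` and `lv`. -/
def OnPathVV {d : ℕ} (lu lv le : List (V d)) : Prop :=
  if lu.take 2 = lv.take 2 then (le <+: lu ∨ le <+: lv) ∧ cpl lu lv < le.length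
  else ((le <+: lu ∨ le <+: lv) ∧ 3 ≤ le.length) ∨ le.length = 2

/-- `lw` is a vertex on the (unique) tree path between tree vertices `lu` and `lv`. -/
def OnPathVertexVV {d : ℕ} (lu lv lw : List (V d)) : Prop :=
  if lu.take 2 = lv.take 2 then (lw <+: lu ∨ lw <+: lv) ∧ cpl lu lv ≤ lw.length
  else (lw <+: lu ∨ lw <+: lv) ∧ 2 ≤ lw.length

/-- A link of the decoding tree `T_{i,q}` for syndrome `s`: a path in the tree
whose vertex endpoints (if any) are associated with unsatisfied checks; an
endpoint is either a tree vertex or a dangling edge. -/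
structure Link (d : ℕ) (a b : V d) (i : ℕ) (s : V d → ZMod 2) where
  endA : List (V d)
  endB : List (V d)
  hA : IsTreeVertex d a b i endA ∨ IsDangling d a b i endA
  hB : IsTreeVertex d a b i endB ∨ IsDangling d a b i endB
  hAu : IsTreeVertex d a b i endA → s (vcheck endA) = 1
  hBu : IsTreeVertex d a b i endB → s (vcheck endB) = 1
  hne : endA ≠ endB

variable {d : ℕ} {a b : V d} {i : ℕ} {s : V d → ZMod 2}

/-- The tree edges lying on a link. -/
def Link.on (L : Link d a b i s) (le : List (V d)) : Prop :=
  OnPathVV (stripD i L.endA) (stripD i L.endB) le ∨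
    (L.endA.length = i + 2 ∧ le = L.endA) ∨ (L.endB.length = i + 2 ∧ le = L.endB)

/-- The length (number of edges) of a link. -/
def Link.len (L : Link d a b i s) : ℕ :=
  treeDist (stripD i L.endA) (stripD i L.endB) +
    (if L.endA.length = i + 2 then 1 else 0) + (if L.endB.length = i + 2 then 1 else 0)

/-- A proper link: both endpoints are (unsatisfied) tree vertices. -/
def Link.Proper (L : Link d a b i s) : Prop :=
  IsTreeVertex d a b i L.endA ∧ IsTreeVertex d a b i L.endB

/-- A labeled link (w.r.t. a configuration `C`): all its edges are labeled. -/
def Link.IsLabeled (L : Link d a b i s) (C : List (V d) → ZMod 2) : Prop :=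
  ∀ le, IsTreeEdge d a b i le → L.on le → C le = 1

/-- A maximal labeled link: it cannot be extended into a longer labeled link. -/
def Link.IsMaxLabeled (L : Link d a b i s) (C : List (V d) → ZMod 2) : Prop :=
  L.IsLabeled C ∧
    ∀ L' : Link d a b i s, L'.IsLabeled C → (∀ le, L.on le → L'.on le) → L'.len ≤ L.len

/-- An `I`-link: a proper link of length 4 not containing the root, descending
four levels of the tree. -/
def Link.IsI (L : Link d a b i s) : Prop :=
  L.Proper ∧ L.len = 4 ∧ ¬ L.on [a, b] ∧
    (L.endA.length + 4 = L.endB.length ∨ L.endB.length + 4 = L.endA.length)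

/-- A `Γ`-link: a proper link of length 4 not containing the root, going up one
level then down three. -/
def Link.IsGamma (L : Link d a b i s) : Prop :=
  L.Proper ∧ L.len = 4 ∧ ¬ L.on [a, b] ∧
    (L.endA.length + 2 = L.endB.length ∨ L.endB.length + 2 = L.endA.length)

/-- A `Λ`-link: a proper link of length 4 not containing the root, going up two
levels then down two (its endpoints are at the same depth). -/
def Link.IsLambda (L : Link d a b i s) : Prop :=
  L.Proper ∧ L.len = 4 ∧ ¬ L.on [a, b] ∧ L.endA.length = L.endB.length

/-- Distance of a tree vertex to the bottom: minimal length of a path starting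
at that vertex and ending with a dangling edge. -/
noncomputable def distToBottom (d : ℕ) (a b : V d) (i : ℕ) (lv : List (V d)) : ℕ :=
  sInf {n : ℕ | ∃ le, IsDangling d a b i le ∧ n = treeDist lv le.dropLast + 1}

/-- A walk in the decoding tree: a sequence of tree edges `es` together with the
sequence `vs` of tree vertices through which consecutive edges are traversed. -/
structure TreeWalk (d : ℕ) (a b : V d) (i : ℕ) where
  es : List (List (V d))
  vs : List (List (V d))
  hlen : vs.length + 1 = es.length
  hes : ∀ le ∈ es, IsTreeEdge d a b i le
  hvs : ∀ lv ∈ vs, IsTreeVertex d a b i lv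
  hinc : ∀ (j : ℕ) (hj : j < vs.length),
    IncidentVE (vs[j]'hj) (es[j]'(by omega)) ∧ IncidentVE (vs[j]'hj) (es[j + 1]'(by omega))
  htrav : ∀ (j : ℕ) (hj : j + 1 < vs.length), vs[j]'(by omega) ≠ vs[j + 1]'hj

/-- The four unit directions of the square lattice. -/
def dirVec (d : ℕ) : Fin 4 → V d := ![(1, 0), (0, 1), (-1, 0), (0, -1)]

/-- A rigid embedding of a patch `K` of `T_d` into `T_{d'}`: an injective map
which, up to a fixed symmetry `g` of the square (an element of the dihedral
group acting on the four directions), preserves the local square-lattice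
structure — hence it is an injective graph homomorphism mapping plaquettes to
plaquettes. -/
def IsRigidEmbed (d d' : ℕ) (K : Set (V d)) (φ : V d → V d') : Prop :=
  Set.InjOn φ K ∧ ∃ g : Fin 4 → Fin 4, Function.Bijective g ∧
    (∀ j, g (j + 2) = g j + 2) ∧
    ∀ x ∈ K, ∀ j : Fin 4, x + dirVec d j ∈ K →
      φ (x + dirVec d j) = φ x + dirVec d' (g j)

/-- The embedding of a syndrome under an embedding map `φ`. -/
noncomputable def embedSynd (d d' : ℕ) (s : V d → ZMod 2) (φ : V d → V d') :
    V d' → ZMod 2 :=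
  fun c' => @ite _ (∃ c, s c = 1 ∧ φ c = c') (Classical.propDecidable _) 1 0


section AuxChainWalk


open SimpleGraph List

variable {α : Type*} {G : SimpleGraph α}

/-- From a nonempty chain, a walk from its head to its last element. -/
lemma exists_walk_of_chain' :
    ∀ (l : List α) (h : l ≠ []) (_ : l.Chain' G.Adj),
      ∃ p : G.Walk (l.head h) (l.getLast h), p.length + 1 = l.length := by
  intro l
  induction l with
  | nil => simp
  | cons x t ih =>
    intro h hc
    cases t with
    | nil => exact ⟨SimpleGraph.Walk.nil, rfl⟩
    | cons y r =>
      obtain ⟨hadj, hc'⟩ := List.isChain_cons_cons.mp hc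
      obtain ⟨p, hp⟩ := ih (by simp) hc'
      rw [show (x :: y :: r).getLast h = (y :: r).getLast (by simp) from
        List.getLast_cons (by simp)]
      exact ⟨SimpleGraph.Walk.cons hadj p, by change p.length + 1 + 1 = _; simpa using hp⟩

/-- If two chains meet at indices `ka`, `kb`, their last elements are close. -/
lemma dist_getLast_le_of_meet {lu lv : List α} (hu : lu ≠ []) (hv : lv ≠ [])
    (hcu : lu.Chain' G.Adj) (hcv : lv.Chain' G.Adj) {ka kb : ℕ}
    (hka : ka < lu.length) (hkb : kb < lv.length)
    (hmeet : lu[ka] = lv[kb]) :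
    G.dist (lu.getLast hu) (lv.getLast hv) ≤
      (lu.length - 1 - ka) + (lv.length - 1 - kb) := by
  have hdu : lu.drop ka ≠ [] := by simp; omega
  have hdv : lv.drop kb ≠ [] := by simp; omega
  obtain ⟨p, hp⟩ := exists_walk_of_chain' (G := G) (lu.drop ka) hdu (hcu.drop ka)
  obtain ⟨q, hq⟩ := exists_walk_of_chain' (G := G) (lv.drop kb) hdv (hcv.drop kb)
  have e1 : (lu.drop ka).getLast hdu = lu.getLast hu := List.getLast_drop hdu
  have e2 : (lv.drop kb).getLast hdv = lv.getLast hv := List.getLast_drop hdv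
  have e3 : (lu.drop ka).head hdu = (lv.drop kb).head hdv := by
    rw [List.head_drop hdu, List.head_drop hdv]; exact hmeet
  let w : G.Walk (lu.getLast hu) (lv.getLast hv) :=
    (p.reverse.copy e1 e3).append (q.copy rfl e2)
  have hw : w.length = p.length + q.length := by
    simp [w]
  have := SimpleGraph.dist_le w
  rw [hw] at this
  simp only [List.length_drop] at hp hq
  omega


end AuxChainWalk

lemma cpl_le_left {d : ℕ} : ∀ l1 l2 : List (V d), cpl l1 l2 ≤ l1.length
  | [], _ => by simp [cpl]
  | x :: xs, [] => by simp [cpl]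
  | x :: xs, y :: ys => by
    simp only [cpl]
    split
    · simpa using cpl_le_left xs ys
    · simp

lemma cpl_le_right {d : ℕ} : ∀ l1 l2 : List (V d), cpl l1 l2 ≤ l2.length
  | [], _ => by simp [cpl]
  | x :: xs, [] => by simp [cpl]
  | x :: xs, y :: ys => by
    simp only [cpl]
    split
    · simpa using cpl_le_right xs ys
    · simp

lemma getElem?_eq_of_lt_cpl {d : ℕ} :
    ∀ (l1 l2 : List (V d)) (j : ℕ), j < cpl l1 l2 → l1[j]? = l2[j]?
  | [], _, j => by simp [cpl]
  | x :: xs, [], j => by simp [cpl]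
  | x :: xs, y :: ys, j => by
    simp only [cpl]
    split
    · rename_i hxy
      intro hj
      cases j with
      | zero => simp [hxy]
      | succ k =>
        simpa using getElem?_eq_of_lt_cpl xs ys k (by omega)
    · omega

lemma two_le_cpl {d : ℕ} {l1 l2 : List (V d)} (h : l1.take 2 = l2.take 2)
    (h1 : 2 ≤ l1.length) (h2 : 2 ≤ l2.length) : 2 ≤ cpl l1 l2 := by
  match l1, l2 with
  | x :: y :: xs, x' :: y' :: ys =>
    simp only [List.take, List.cons.injEq] at h
    obtain ⟨hx, hy, -⟩ := h
    simp [cpl, hx, hy]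

lemma vcheck_eq_getLast {d : ℕ} {l : List (V d)} (h : l ≠ []) :
    vcheck l = l.getLast h := by
  rw [vcheck, List.getLastD_eq_getLast?, List.getLast?_eq_getLast_of_ne_nil h]
  rfl

/-- **Lemma (same-check endpoints of short labeled links).** -/
theorem labeled_links_same_check (d : ℕ) (hd : 3 ≤ d) (s : V d → ZMod 2)
    (hsep : ∀ c c' : V d, s c = 1 → s c' = 1 → c ≠ c' → 5 ≤ (Toric d).dist c c')
    (a b : V d) (hab : (Toric d).Adj a b) (i : ℕ)
    (C : List (V d) → ZMod 2) (hC : IsConfig d a b i s C)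
    (hshort : ∀ L : Link d a b i s, L.IsLabeled C → L.len ≤ 4) :
    ∀ L : Link d a b i s, L.IsLabeled C → L.Proper →
      vcheck L.endA = vcheck L.endB := by
  intro L hlab hprop
  obtain ⟨hA, hB⟩ := hprop
  have hlenA : L.endA.length ≤ i + 1 := hA.2.2.2
  have hlenB : L.endB.length ≤ i + 1 := hB.2.2.2
  have hlA2 : 2 ≤ L.endA.length := hA.2.2.1
  have hlB2 : 2 ≤ L.endB.length := hB.2.2.1
  have hAne : L.endA ≠ [] := by intro h; rw [h] at hlA2; simp at hlA2
  have hBne : L.endB ≠ [] := by intro h; rw [h] at hlB2; simp at hlB2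
  have hcA : L.endA.Chain' (Toric d).Adj := hA.1.1
  have hcB : L.endB.Chain' (Toric d).Adj := hB.1.1
  have hlen4 := hshort L hlab
  have hstrip : L.len = treeDist L.endA L.endB := by
    simp [Link.len, stripD, show L.endA.length ≠ i + 2 by omega,
      show L.endB.length ≠ i + 2 by omega]
  by_contra hvne
  have h5 := hsep _ _ (L.hAu hA) (L.hBu hB) hvne
  rw [vcheck_eq_getLast hAne, vcheck_eq_getLast hBne] at h5
  have hdist : (Toric d).dist (L.endA.getLast hAne) (L.endB.getLast hBne) ≤
      treeDist L.endA L.endB := by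
    unfold treeDist
    split
    · rename_i ht
      set m := cpl L.endA L.endB with hm
      have hm2 : 2 ≤ m := two_le_cpl ht hlA2 hlB2
      have hmA : m ≤ L.endA.length := cpl_le_left _ _
      have hmB : m ≤ L.endB.length := cpl_le_right _ _
      have hk1 : m - 1 < L.endA.length := by omega
      have hk2 : m - 1 < L.endB.length := by omega
      have hmeet : L.endA[m - 1] = L.endB[m - 1] := by
        have hq := getElem?_eq_of_lt_cpl L.endA L.endB (m - 1) (by omega)
        rw [List.getElem?_eq_getElem hk1, List.getElem?_eq_getElem hk2] at hq
        exact Option.some.inj hq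
      have := dist_getLast_le_of_meet hAne hBne hcA hcB hk1 hk2 hmeet
      omega
    · rename_i ht
      rcases hA.2.1 with h1 | h1 <;> rcases hB.2.1 with h2 | h2
      · exact absurd (h1.trans h2.symm) ht
      · have hk1 : (1 : ℕ) < L.endA.length := by omega
        have hk2 : (0 : ℕ) < L.endB.length := by omega
        have hmeet : L.endA[1] = L.endB[0] := by
          have e1 : L.endA[1]? = some b := by
            have : (L.endA.take 2)[1]? = some b := by rw [h1]; rfl
            simpa [List.getElem?_take] using this
          have e2 : L.endB[0]? = some b := by
            have : (L.endB.take 2)[0]? = some b := by rw [h2]; rfl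
            simpa [List.getElem?_take] using this
          rw [List.getElem?_eq_getElem hk1] at e1
          rw [List.getElem?_eq_getElem hk2] at e2
          rw [Option.some.inj e1, Option.some.inj e2]
        have := dist_getLast_le_of_meet hAne hBne hcA hcB hk1 hk2 hmeet
        omega
      · have hk1 : (0 : ℕ) < L.endA.length := by omega
        have hk2 : (1 : ℕ) < L.endB.length := by omega
        have hmeet : L.endA[0] = L.endB[1] := by
          have e1 : L.endA[0]? = some b := by
            have : (L.endA.take 2)[0]? = some b := by rw [h1]; rfl
            simpa [List.getElem?_take] using this
          have e2 : L.endB[1]? = some b := by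
            have : (L.endB.take 2)[1]? = some b := by rw [h2]; rfl
            simpa [List.getElem?_take] using this
          rw [List.getElem?_eq_getElem hk1] at e1
          rw [List.getElem?_eq_getElem hk2] at e2
          rw [Option.some.inj e1, Option.some.inj e2]
        have := dist_getLast_le_of_meet hAne hBne hcA hcB hk1 hk2 hmeet
        omega
      · exact absurd (h1.trans h2.symm) ht
  omega

end ToricMS
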